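/- arXiv:math/0601724 — 10 statements merged into one kernel-verified Lean document; each statement's English description precedes it below -/
import Mathlib

section
/- Let X be a topological space and G ⊆ X an open set. Then the set Ĝ = {U : Ultrafilter X | G ∈ U} is a compact subset of W(X) = (Ultrafilter X, ^S T). -/
/-- The "standard" topology `^S T` on the space of ultrafilters `W(X) = Ultrafilter X`,
generated by the sets `Ĝ = {U | G ∈ U}` for `G` open in `X`. -/
def sTop (X : Type*) [TopologicalSpace X] : TopologicalSpace (Ultrafilter X) :=
  TopologicalSpace.generateFrom
    {s : Set (Ultrafilter X) | ∃ G : Set X, IsOpen G ∧ s = {U : Ultrafilter X | G ∈ U}}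

/-- for an open set `G ⊆ X`, the set `Ĝ = {U | G ∈ U}` is a compact
subset of `W(X) = (Ultrafilter X, ^S T)`. -/
theorem stmt1 (X : Type*) [TopologicalSpace X] (G : Set X) (hG : IsOpen G) :
    @IsCompact (Ultrafilter X) (sTop X) {U : Ultrafilter X | G ∈ U} := by
  have h2 : IsCompact {U : Ultrafilter X | G ∈ U} :=
    (ultrafilter_isClosed_basic G).isCompact
  have hle : Ultrafilter.topologicalSpace ≤ sTop X := by
    apply le_generateFrom
    rintro s ⟨H, -, rfl⟩
    exact ultrafilter_isOpen_basic H
  have hcont : @Continuous _ _ Ultrafilter.topologicalSpace (sTop X) id :=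
    continuous_id_of_le hle
  have := @IsCompact.image _ _ Ultrafilter.topologicalSpace (sTop X) _ id h2 hcont
  rwa [Set.image_id] at this
end

section
/- Let X be a topological space. Then W(X) = (Ultrafilter X, ^S T) is a locally compact space: every neighbourhood of any point of W(X) contains a compact neighbourhood of that point. -/
/-- `W(X) = (Ultrafilter X, ^S T)` is a locally compact space: every
neighbourhood of any point contains a compact neighbourhood of that point. -/
theorem stmt2 (X : Type*) [TopologicalSpace X] :
    @LocallyCompactSpace (Ultrafilter X) (sTop X) := by
  -- the generating sets form a basis of `sTop`
  have hb : @TopologicalSpace.IsTopologicalBasis (Ultrafilter X) (sTop X)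
      {s : Set (Ultrafilter X) | ∃ G : Set X, IsOpen G ∧ s = {U : Ultrafilter X | G ∈ U}} := by
    refine @TopologicalSpace.IsTopologicalBasis.mk _ (sTop X) _ ?_ ?_ rfl
    · rintro t₁ ⟨G, hG, rfl⟩ t₂ ⟨H, hH, rfl⟩ U hU
      refine ⟨{V : Ultrafilter X | G ∩ H ∈ V}, ⟨G ∩ H, hG.inter hH, rfl⟩, ?_, ?_⟩
      · exact (U.inter_mem_iff).2 ⟨hU.1, hU.2⟩
      · intro V hV
        exact ⟨V.mem_of_superset hV Set.inter_subset_left,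
               V.mem_of_superset hV Set.inter_subset_right⟩
    · refine Set.eq_univ_of_forall fun U => ?_
      exact ⟨{V : Ultrafilter X | (Set.univ : Set X) ∈ V}, ⟨Set.univ, isOpen_univ, rfl⟩,
        Filter.univ_mem⟩
  -- `sTop` is coarser than the standard (Stone) topology on ultrafilters
  have hle : (Ultrafilter.topologicalSpace : TopologicalSpace (Ultrafilter X)) ≤ sTop X := by
    refine le_generateFrom ?_
    rintro s ⟨G, hG, rfl⟩
    exact ultrafilter_isOpen_basic G
  have hcont : @Continuous (Ultrafilter X) (Ultrafilter X)
      Ultrafilter.topologicalSpace (sTop X) id := continuous_id_iff_le.2 hle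
  refine @LocallyCompactSpace.mk _ (sTop X) ?_
  intro U V hV
  rcases (@TopologicalSpace.IsTopologicalBasis.mem_nhds_iff _ (sTop X) _ _ _ hb).1 hV with ⟨s, ⟨G, hG, rfl⟩, hUs, hsV⟩
  refine ⟨{V : Ultrafilter X | G ∈ V}, ?_, hsV, ?_⟩
  · letI := sTop X
    exact (TopologicalSpace.IsTopologicalBasis.isOpen hb ⟨G, hG, rfl⟩).mem_nhds hUs
  · have hcl : IsClosed {V : Ultrafilter X | G ∈ V} := ultrafilter_isClosed_basic G
    have hcomp : IsCompact {V : Ultrafilter X | G ∈ V} := hcl.isCompact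
    simpa using @IsCompact.image _ _ _ (sTop X) _ _ hcomp hcont
end

section
/- Let X be a topological space and let V be an ultrafilter on W(X) = (Ultrafilter X, ^S T). Let p be the ultrafilter on X defined by A ∈ p ↔ {U : Ultrafilter X | A ∈ U} ∈ V (the monadic join of V). Then the set of cluster points of V in W(X) equals the ^S T-closure of the singleton {p}. In particular W(X) is supercompact. -/
/-!
Both sides are described by the basic open sets `Ĝ`: a point `z` is a cluster point of `V`
iff `Ĝ ∈ V` for every open `G ∈ z`, and `z` lies in the closure of `{p}` iff `p ∈ Ĝ` for every
open `G ∈ z`. For the join `p` of `V`, the conditions `Ĝ ∈ V` and `G ∈ p` coincide.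
-/

namespace sTop

open Topology

attribute [local instance] sTop

variable {X : Type*} [TopologicalSpace X]

theorem isOpen_setOf_mem {G : Set X} (hG : IsOpen G) : IsOpen {U : Ultrafilter X | G ∈ U} :=
  TopologicalSpace.isOpen_generateFrom_of_mem ⟨G, hG, rfl⟩

theorem le_nhds_iff {F : Filter (Ultrafilter X)} {z : Ultrafilter X} :
    F ≤ 𝓝 z ↔ ∀ G : Set X, IsOpen G → G ∈ z → {U : Ultrafilter X | G ∈ U} ∈ F := by
  unfold sTop
  rw [TopologicalSpace.nhds_generateFrom]
  simp only [le_iInf_iff, Filter.le_principal_iff, Set.mem_ofPred_eq, and_imp]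
  constructor
  · exact fun h G hG hGz => h _ hGz ⟨G, hG, rfl⟩
  · rintro h _ hzs ⟨G, hG, rfl⟩
    exact h G hG hzs

theorem clusterPt_iff {V : Ultrafilter (Ultrafilter X)} {z : Ultrafilter X} :
    ClusterPt z ↑V ↔ ∀ G : Set X, IsOpen G → G ∈ z → {U : Ultrafilter X | G ∈ U} ∈ V := by
  rw [Ultrafilter.clusterPt_iff, le_nhds_iff]
  rfl

theorem mem_closure_singleton_iff {p z : Ultrafilter X} :
    z ∈ closure {p} ↔ ∀ G : Set X, IsOpen G → G ∈ z → G ∈ p := by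
  rw [← specializes_iff_mem_closure, specializes_iff_nhds, le_nhds_iff]
  exact forall₂_congr fun G hG => imp_congr_right fun _ => (isOpen_setOf_mem hG).mem_nhds_iff

theorem setOf_clusterPt_eq_closure_singleton (V : Ultrafilter (Ultrafilter X)) (p : Ultrafilter X)
    (hp : ∀ A : Set X, A ∈ p ↔ {U : Ultrafilter X | A ∈ U} ∈ V) :
    {z : Ultrafilter X | ClusterPt z ↑V} = closure {p} := by
  ext z
  simp only [Set.mem_ofPred_eq, clusterPt_iff, mem_closure_singleton_iff, hp]

end sTop

/-- for an ultrafilter `V` on `W(X)` and `p` the ultrafilter on `X`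
defined by `A ∈ p ↔ {U | A ∈ U} ∈ V` (the monadic join of `V`), the set of cluster
points of `V` in `W(X)` equals the `^S T`-closure of `{p}`.  In particular `W(X)`
is supercompact. -/
theorem stmt3 (X : Type*) [TopologicalSpace X] (V : Ultrafilter (Ultrafilter X))
    (p : Ultrafilter X) (hp : ∀ A : Set X, A ∈ p ↔ {U : Ultrafilter X | A ∈ U} ∈ V) :
    ({z : Ultrafilter X | @ClusterPt (Ultrafilter X) (sTop X) z ↑V}
        = @closure (Ultrafilter X) (sTop X) {p}) ∧
    (∀ W : Ultrafilter (Ultrafilter X), ∃ q : Ultrafilter X,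
      {z : Ultrafilter X | @ClusterPt (Ultrafilter X) (sTop X) z ↑W}
        = @closure (Ultrafilter X) (sTop X) {q}) :=
  ⟨sTop.setOf_clusterPt_eq_closure_singleton V p hp, fun W =>
    ⟨W.bind id, sTop.setOf_clusterPt_eq_closure_singleton W _ fun _ => Filter.mem_bind'⟩⟩
end

section
/- Let X and Y be topological spaces and f : X → Y a function. Then f is continuous if and only if the induced map Ultrafilter.map f : W(X) → W(Y) is continuous with respect to the topologies ^S T on W(X) and ^S T' on W(Y). (Proposition 2.2 of the paper.) -/
/-- Proposition 2.2: `f : X → Y` is continuous iff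
`Ultrafilter.map f : W(X) → W(Y)` is continuous with respect to the topologies
`^S T` and `^S T'`. -/
theorem stmt5 (X Y : Type*) [TopologicalSpace X] [TopologicalSpace Y] (f : X → Y) :
    Continuous f ↔
      @Continuous (Ultrafilter X) (Ultrafilter Y) (sTop X) (sTop Y) (Ultrafilter.map f) := by
  constructor
  · intro hf
    apply continuous_generateFrom_iff.mpr
    rintro s ⟨G, hG, rfl⟩
    have : Ultrafilter.map f ⁻¹' {U : Ultrafilter Y | G ∈ U}
        = {U : Ultrafilter X | f ⁻¹' G ∈ U} := by
      ext U; simp [Ultrafilter.mem_map]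
    rw [this]
    exact TopologicalSpace.isOpen_generateFrom_of_mem ⟨f ⁻¹' G, hG.preimage hf, rfl⟩
  · intro hmap
    letI := sTop X
    letI := sTop Y
    have hpure : @Continuous X (Ultrafilter X) _ (sTop X) pure := by
      apply continuous_generateFrom_iff.mpr
      rintro s ⟨G, hG, rfl⟩
      have : (pure : X → Ultrafilter X) ⁻¹' {U : Ultrafilter X | G ∈ U} = G := by
        ext x; simp
      rwa [this]
    refine continuous_def.mpr fun G hG => ?_
    have : f ⁻¹' G = (pure : X → Ultrafilter X) ⁻¹'
        (Ultrafilter.map f ⁻¹' {U : Ultrafilter Y | G ∈ U}) := by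
      ext x; simp [Ultrafilter.mem_map]
    rw [this]
    exact hpure.isOpen_preimage _ (hmap.isOpen_preimage _
      (TopologicalSpace.isOpen_generateFrom_of_mem ⟨G, hG, rfl⟩))
end

section
/- Let X be a topological space. Then W(X) = (Ultrafilter X, ^S T) is a normal space (any two disjoint closed sets can be separated by disjoint open sets) if and only if X is a normal space. (Proposition 3.1 of the paper.) -/
section Aux

variable {X : Type*} [TopologicalSpace X]

/-- The set `Â` of ultrafilters containing `A`. -/
def uhat (A : Set X) : Set (Ultrafilter X) := {U : Ultrafilter X | A ∈ U}

lemma uhat_open {G : Set X} (hG : IsOpen G) : @IsOpen _ (sTop X) (uhat G) :=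
  TopologicalSpace.GenerateOpen.basic _ ⟨G, hG, rfl⟩

lemma uhat_closed {F : Set X} (hF : IsClosed F) : @IsClosed _ (sTop X) (uhat F) := by
  have h : (uhat F)ᶜ = uhat Fᶜ := by
    ext U; simp [uhat, Ultrafilter.compl_mem_iff_notMem]
  exact @IsClosed.mk (Ultrafilter X) (sTop X) (uhat F)
    (by rw [h]; exact uhat_open hF.isOpen_compl)

/-- Basis property: every point of a `sTop`-open set lies in some basic `uhat G` inside it. -/
lemma uhat_basis {O : Set (Ultrafilter X)}
    (h : TopologicalSpace.GenerateOpen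
      {s : Set (Ultrafilter X) | ∃ G : Set X, IsOpen G ∧ s = {U : Ultrafilter X | G ∈ U}} O) :
    ∀ U : Ultrafilter X, U ∈ O → ∃ G : Set X, IsOpen G ∧ G ∈ U ∧ uhat G ⊆ O := by
  induction h with
  | basic s hs =>
      obtain ⟨G, hG, rfl⟩ := hs
      exact fun U hU => ⟨G, hG, hU, fun V hV => hV⟩
  | univ => exact fun U _ => ⟨Set.univ, isOpen_univ, Filter.univ_mem, fun _ _ => trivial⟩
  | inter s t _ _ ihs iht =>
      intro U hU
      obtain ⟨G, hG, hGU, hGs⟩ := ihs U hU.1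
      obtain ⟨H, hH, hHU, hHt⟩ := iht U hU.2
      refine ⟨G ∩ H, hG.inter hH, Filter.inter_mem hGU hHU, fun V hV => ?_⟩
      exact ⟨hGs (Filter.mem_of_superset hV Set.inter_subset_left),
        hHt (Filter.mem_of_superset hV Set.inter_subset_right)⟩
  | sUnion S _ ih =>
      intro U hU
      obtain ⟨s, hsS, hUs⟩ := hU
      obtain ⟨G, h1, h2, h3⟩ := ih s hsS U hUs
      exact ⟨G, h1, h2, h3.trans (Set.subset_sUnion_of_mem hsS)⟩

lemma pure_continuous : @Continuous X (Ultrafilter X) _ (sTop X) (pure : X → Ultrafilter X) := by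
  rw [sTop, continuous_generateFrom_iff]
  rintro s ⟨G, hG, rfl⟩
  have : (pure : X → Ultrafilter X) ⁻¹' {U : Ultrafilter X | G ∈ U} = G := by
    ext x; simp
  rwa [this]

end Aux

/-- Proposition 3.1: `W(X) = (Ultrafilter X, ^S T)` is a normal space
iff `X` is a normal space. -/
theorem stmt6 (X : Type*) [TopologicalSpace X] :
    @NormalSpace (Ultrafilter X) (sTop X) ↔ NormalSpace X := by
  constructor
  · intro hW
    refine ⟨fun s t hs ht hst => ?_⟩
    have hsc : @IsClosed _ (sTop X) (uhat s) := uhat_closed hs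
    have htc : @IsClosed _ (sTop X) (uhat t) := uhat_closed ht
    have hd : Disjoint (uhat s) (uhat t) := by
      rw [Set.disjoint_left]
      intro U hU hU'
      have : s ∩ t ∈ U := Filter.inter_mem hU hU'
      rw [Set.disjoint_iff_inter_eq_empty.mp hst] at this
      exact U.neBot.ne (Filter.empty_mem_iff_bot.mp this)
    obtain ⟨u, v, hu, hv, hsu, htv, huv⟩ := hW.normal (uhat s) (uhat t) hsc htc hd
    refine ⟨(pure : X → Ultrafilter X) ⁻¹' u, (pure : X → Ultrafilter X) ⁻¹' v,
      @Continuous.isOpen_preimage X (Ultrafilter X) _ (sTop X) _ pure_continuous u hu,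
      @Continuous.isOpen_preimage X (Ultrafilter X) _ (sTop X) _ pure_continuous v hv,
      fun x hx => hsu (by simpa [uhat] using hx), fun x hx => htv (by simpa [uhat] using hx),
      huv.preimage _⟩
  · intro hX
    refine @NormalSpace.mk _ (sTop X) (fun C D hC hD hCD => ?_)
    -- the families of closed sets whose hats contain C resp. D
    set FC : Set (Set X) := {F : Set X | IsClosed F ∧ C ⊆ uhat F} with hFC
    set FD : Set (Set X) := {F : Set X | IsClosed F ∧ D ⊆ uhat F} with hFD
    -- C is the intersection of the hats of members of FC, and likewise for D
    have hCmem : ∀ U : Ultrafilter X, U ∉ C → ∃ F ∈ FC, F ∉ U := by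
      intro U hU
      obtain ⟨G, hG, hGU, hGsub⟩ := uhat_basis (X := X) hC.isOpen_compl U hU
      refine ⟨Gᶜ, ⟨hG.isClosed_compl, fun V hV => ?_⟩, fun h => ?_⟩
      · by_contra hGc
        have : G ∈ V := (Ultrafilter.compl_mem_iff_notMem.not_left.mp (by simpa [uhat] using hGc))
        exact hGsub this hV
      · exact absurd hGU (Ultrafilter.compl_mem_iff_notMem.mp h)
    have hDmem : ∀ U : Ultrafilter X, U ∉ D → ∃ F ∈ FD, F ∉ U := by
      intro U hU
      obtain ⟨G, hG, hGU, hGsub⟩ := uhat_basis (X := X) hD.isOpen_compl U hU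
      refine ⟨Gᶜ, ⟨hG.isClosed_compl, fun V hV => ?_⟩, fun h => ?_⟩
      · by_contra hGc
        have : G ∈ V := (Ultrafilter.compl_mem_iff_notMem.not_left.mp (by simpa [uhat] using hGc))
        exact hGsub this hV
      · exact absurd hGU (Ultrafilter.compl_mem_iff_notMem.mp h)
    -- the family FC ∪ FD does not have the finite intersection property
    have hnotFIP : ¬ Filter.NeBot (Filter.generate (FC ∪ FD)) := by
      intro hne
      set U : Ultrafilter X := Ultrafilter.of (Filter.generate (FC ∪ FD))
      have hle : (↑U : Filter X) ≤ Filter.generate (FC ∪ FD) := Ultrafilter.of_le _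
      have hUC : U ∈ C := by
        by_contra h
        obtain ⟨F, hF, hFU⟩ := hCmem U h
        exact hFU (hle (Filter.mem_generate_of_mem (Or.inl hF)))
      have hUD : U ∈ D := by
        by_contra h
        obtain ⟨F, hF, hFU⟩ := hDmem U h
        exact hFU (hle (Filter.mem_generate_of_mem (Or.inr hF)))
      exact Set.disjoint_left.mp hCD hUC hUD
    rw [Filter.generate_neBot_iff] at hnotFIP
    push_neg at hnotFIP
    obtain ⟨t, hts, htfin, htempty⟩ := hnotFIP
    -- split the finite witness into the FC part and the rest
    set tC : Set (Set X) := {s ∈ t | s ∈ FC} with htC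
    set tD : Set (Set X) := t \ tC with htD
    set F : Set X := ⋂₀ tC with hF
    set G : Set X := ⋂₀ tD with hG
    have hFG : F ∩ G = ∅ := by
      have hsub : tC ⊆ t := fun s hs => hs.1
      rw [hF, hG, ← Set.sInter_union, htD, Set.union_diff_cancel hsub]
      exact htempty
    have hFclosed : IsClosed F := by
      refine isClosed_sInter fun s hs => hs.2.1
    have hGclosed : IsClosed G := by
      refine isClosed_sInter fun s hs => ?_
      rcases hts hs.1 with h | h
      exacts [h.1, h.1]
    have hCF : C ⊆ uhat F := by
      intro U hU
      exact (Filter.sInter_mem (f := (U : Filter X))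
        (htfin.subset (fun s hs => hs.1))).mpr (fun s hs => hs.2.2 hU)
    have hDG : D ⊆ uhat G := by
      intro U hU
      refine (Filter.sInter_mem (f := (U : Filter X))
        (htfin.subset (fun s hs => hs.1))).mpr (fun s hs => ?_)
      rcases hts hs.1 with h | h
      · exact absurd ⟨hs.1, h⟩ hs.2
      · exact h.2 hU
    -- separate F and G in X and push forward
    obtain ⟨u, v, hu, hv, hFu, hGv, huv⟩ := hX.normal F G hFclosed hGclosed
      (Set.disjoint_iff_inter_eq_empty.mpr hFG)
    refine ⟨uhat u, uhat v, uhat_open hu, uhat_open hv,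
      fun U hU => Filter.mem_of_superset (hCF hU) hFu,
      fun U hU => Filter.mem_of_superset (hDG hU) hGv, ?_⟩
    rw [Set.disjoint_left]
    intro U hU hU'
    have : u ∩ v ∈ U := Filter.inter_mem hU hU'
    rw [Set.disjoint_iff_inter_eq_empty.mp huv] at this
    exact U.neBot.ne (Filter.empty_mem_iff_bot.mp this)
end

section
/- Let X be a topological space. Then W(X) = (Ultrafilter X, ^S T) is a regular space if and only if every open subset of X is closed. (Proposition 3.2 of the paper.) -/
open Topology
section Aux

variable {X : Type*} [TopologicalSpace X]

lemma hat_isOpen {G : Set X} (hG : IsOpen G) :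
    IsOpen[sTop X] {U : Ultrafilter X | G ∈ U} :=
  TopologicalSpace.GenerateOpen.basic _ ⟨G, hG, rfl⟩

lemma mem_nhds_sTop {U : Ultrafilter X} {t : Set (Ultrafilter X)} :
    t ∈ @nhds _ (sTop X) U ↔
      ∃ G : Set X, IsOpen G ∧ G ∈ U ∧ {V : Ultrafilter X | G ∈ V} ⊆ t := by
  letI := sTop X
  constructor
  · intro ht
    obtain ⟨s, hst, hs, hUs⟩ := mem_nhds_iff.1 ht
    suffices h : ∀ s : Set (Ultrafilter X),
        TopologicalSpace.GenerateOpen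
          {s : Set (Ultrafilter X) | ∃ G : Set X, IsOpen G ∧ s = {U : Ultrafilter X | G ∈ U}} s →
        ∀ U : Ultrafilter X, U ∈ s →
          ∃ G, IsOpen G ∧ G ∈ U ∧ {V : Ultrafilter X | G ∈ V} ⊆ s by
      obtain ⟨G, h1, h2, h3⟩ := h s hs U hUs
      exact ⟨G, h1, h2, h3.trans hst⟩
    intro s hs
    induction hs with
    | basic s hs =>
        rintro U hU
        obtain ⟨G, hG, rfl⟩ := hs
        exact ⟨G, hG, hU, subset_rfl⟩
    | univ => intro U _; exact ⟨Set.univ, isOpen_univ, Filter.univ_mem, fun _ _ => trivial⟩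
    | inter s₁ s₂ _ _ ih1 ih2 =>
        intro U hU
        obtain ⟨G1, hG1, hG1U, hsub1⟩ := ih1 U hU.1
        obtain ⟨G2, hG2, hG2U, hsub2⟩ := ih2 U hU.2
        refine ⟨G1 ∩ G2, hG1.inter hG2, Filter.inter_mem hG1U hG2U, fun V hV => ?_⟩
        exact ⟨hsub1 (Filter.mem_of_superset hV Set.inter_subset_left),
               hsub2 (Filter.mem_of_superset hV Set.inter_subset_right)⟩
    | sUnion S _ ih =>
        rintro U ⟨s, hsS, hUs⟩
        obtain ⟨G, h1, h2, h3⟩ := ih s hsS U hUs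
        exact ⟨G, h1, h2, h3.trans (Set.subset_sUnion_of_mem hsS)⟩
  · rintro ⟨G, hG, hGU, hsub⟩
    exact mem_nhds_iff.2 ⟨_, hsub, hat_isOpen hG, hGU⟩

end Aux

/-- Proposition 3.2: `W(X) = (Ultrafilter X, ^S T)` is a regular space
iff every open subset of `X` is closed. -/
theorem stmt7 (X : Type*) [TopologicalSpace X] :
    @RegularSpace (Ultrafilter X) (sTop X) ↔ ∀ G : Set X, IsOpen G → IsClosed G := by
  letI := sTop X
  constructor
  · intro hreg G hG
    rw [← closure_subset_iff_isClosed]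
    intro x hx
    -- build an ultrafilter refining 𝓝 x ⊓ 𝓟 G
    have hne : Filter.NeBot (nhds x ⊓ Filter.principal G) :=
      mem_closure_iff_clusterPt.1 hx
    set U : Ultrafilter X := Ultrafilter.of (nhds x ⊓ Filter.principal G) with hUdef
    have hle : (U : Filter X) ≤ nhds x ⊓ Filter.principal G := Ultrafilter.of_le _
    have hGU : G ∈ U := hle (Filter.mem_inf_of_right (Filter.mem_principal_self G))
    have hnx : ∀ N ∈ nhds x, N ∈ U := fun N hN => hle (Filter.mem_inf_of_left hN)
    -- hat G is a neighborhood of U; regularity gives a closed neighborhood inside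
    have hmem : {V : Ultrafilter X | G ∈ V} ∈ @nhds _ (sTop X) U :=
      mem_nhds_sTop.2 ⟨G, hG, hGU, subset_rfl⟩
    obtain ⟨t, htU, htc, hts⟩ := exists_mem_nhds_isClosed_subset hmem
    obtain ⟨H, hH, hHU, hHt⟩ := mem_nhds_sTop.1 htU
    -- x is a cluster point of U, hence x ∈ closure H
    have hxH : x ∈ closure H := by
      rw [mem_closure_iff_nhds]
      intro N hN
      have : N ∩ H ∈ U := Filter.inter_mem (hnx N hN) hHU
      exact Ultrafilter.nonempty_of_mem this
    -- pure x lies in the closure of hat H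
    have hpure : (pure x : Ultrafilter X) ∈ closure {V : Ultrafilter X | H ∈ V} := by
      rw [mem_closure_iff_nhds]
      intro N hN
      obtain ⟨K, hK, hKx, hKN⟩ := mem_nhds_sTop.1 hN
      have hxK : x ∈ K := hKx
      obtain ⟨z, hzK, hzH⟩ := mem_closure_iff.1 hxH K hK hxK
      exact ⟨pure z, hKN (by exact hzK), by exact hzH⟩
    have : (pure x : Ultrafilter X) ∈ t :=
      (closure_minimal hHt htc) hpure
    have : G ∈ (pure x : Ultrafilter X) := hts this
    exact this
  · intro h
    apply RegularSpace.of_exists_mem_nhds_isClosed_subset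
    intro U s hs
    obtain ⟨G, hG, hGU, hsub⟩ := mem_nhds_sTop.1 hs
    refine ⟨{V : Ultrafilter X | G ∈ V}, mem_nhds_sTop.2 ⟨G, hG, hGU, subset_rfl⟩, ?_, hsub⟩
    have : {V : Ultrafilter X | G ∈ V}ᶜ = {V : Ultrafilter X | Gᶜ ∈ V} := by
      ext V
      simp [Ultrafilter.compl_mem_iff_notMem]
    rw [← isOpen_compl_iff, this]
    exact hat_isOpen (h G hG).isOpen_compl
end

section
/- Let X be a topological space. Then W(X) = (Ultrafilter X, ^S T) is a completely regular space (points can be separated from closed sets not containing them by continuous real-valued functions; no T0 assumption) if and only if every open subset of X is closed. (Corollary 3.3 of the paper.) -/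
/-- Basic sets form a basis: every open set of `sTop` containing `U` contains a basic
set containing `U`. -/
lemma sTop_mem_basic {X : Type*} [TopologicalSpace X] {s : Set (Ultrafilter X)}
    (hs : TopologicalSpace.GenerateOpen
      {s : Set (Ultrafilter X) | ∃ G : Set X, IsOpen G ∧ s = {U : Ultrafilter X | G ∈ U}} s)
    {U : Ultrafilter X} (hU : U ∈ s) :
    ∃ G : Set X, IsOpen G ∧ G ∈ U ∧ {V : Ultrafilter X | G ∈ V} ⊆ s := by
  induction hs with
  | basic t ht =>
    obtain ⟨G, hG, rfl⟩ := ht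
    exact ⟨G, hG, hU, subset_rfl⟩
  | univ => exact ⟨Set.univ, isOpen_univ, Filter.univ_mem, fun _ _ => trivial⟩
  | inter s t hs ht ihs iht =>
    obtain ⟨G, hG, hGU, hGs⟩ := ihs hU.1
    obtain ⟨H, hH, hHU, hHt⟩ := iht hU.2
    refine ⟨G ∩ H, hG.inter hH, Filter.inter_mem hGU hHU, fun V hV => ?_⟩
    exact ⟨hGs (Filter.mem_of_superset hV Set.inter_subset_left),
      hHt (Filter.mem_of_superset hV Set.inter_subset_right)⟩
  | sUnion S hS ih =>
    obtain ⟨t, htS, hUt⟩ := hU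
    obtain ⟨G, hG, hGU, hGt⟩ := ih t htS hUt
    exact ⟨G, hG, hGU, hGt.trans (Set.subset_sUnion_of_mem htS)⟩

/-- Corollary 3.3: `W(X) = (Ultrafilter X, ^S T)` is completely regular
iff every open subset of `X` is closed. -/
theorem stmt8 (X : Type*) [TopologicalSpace X] :
    @CompletelyRegularSpace (Ultrafilter X) (sTop X) ↔
      ∀ G : Set X, IsOpen G → IsClosed G := by
  classical
  letI : TopologicalSpace (Ultrafilter X) := sTop X
  have hbasic : ∀ G : Set X, IsOpen G → IsOpen {U : Ultrafilter X | G ∈ U} := by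
    intro G hG
    exact TopologicalSpace.GenerateOpen.basic _ ⟨G, hG, rfl⟩
  constructor
  · -- completely regular → every open set is closed
    intro h G hG
    by_contra hGc
    -- pick x in closure G \ G
    have hsub : ¬ closure G ⊆ G := fun hcl => hGc (isClosed_of_closure_subset hcl)
    obtain ⟨x, hxcl, hxG⟩ := Set.not_subset.mp hsub
    -- the ultrafilter P extending 𝓝 x ⊓ 𝓟 G
    haveI hne : (nhds x ⊓ Filter.principal G).NeBot := mem_closure_iff_clusterPt.mp hxcl
    set P := Ultrafilter.of (nhds x ⊓ Filter.principal G) with hPdef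
    have hPle : (P : Filter X) ≤ nhds x ⊓ Filter.principal G := Ultrafilter.of_le _
    have hGP : G ∈ P := hPle (Filter.mem_inf_of_right (Filter.mem_principal_self G))
    have hnhds : ∀ H : Set X, H ∈ nhds x → H ∈ P := fun H hH =>
      hPle (Filter.mem_inf_of_left hH)
    -- the closed set K = Ĝᶜ
    set K : Set (Ultrafilter X) := {U : Ultrafilter X | G ∈ U}ᶜ with hKdef
    have hKclosed : IsClosed K := (hbasic G hG).isClosed_compl
    have hPK : P ∉ K := fun hP => hP hGP
    obtain ⟨f, hf, hf0, hf1⟩ := h.completely_regular P K hKclosed hPK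
    -- pure x ∈ K
    have hpureK : (pure x : Ultrafilter X) ∈ K := by
      simp only [hKdef, Set.mem_compl_iff, Set.mem_setOf_eq, Ultrafilter.mem_pure]
      exact hxG
    -- pure x ∈ closure {P}
    have hcl : (pure x : Ultrafilter X) ∈ closure {(P : Ultrafilter X)} := by
      rw [mem_closure_iff]
      intro o ho hpo
      obtain ⟨H, hHopen, hHpure, hHo⟩ := sTop_mem_basic ho hpo
      have hxH : x ∈ H := Ultrafilter.mem_pure.mp hHpure
      have : H ∈ P := hnhds H (hHopen.mem_nhds hxH)
      exact ⟨P, hHo this, rfl⟩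
    -- continuous functions can't distinguish pure x and P
    have himg : f (pure x) ∈ closure (f '' {(P : Ultrafilter X)}) :=
      image_closure_subset_closure_image hf ⟨pure x, hcl, rfl⟩
    rw [Set.image_singleton, closure_singleton, Set.mem_singleton_iff] at himg
    have h1 : f (pure x) = 1 := hf1 hpureK
    rw [h1, hf0] at himg
    exact absurd (congrArg Subtype.val himg) (by norm_num)
  · -- every open set is closed → completely regular
    intro h
    constructor
    intro U K hK hUK
    have hKco : IsOpen Kᶜ := hK.isOpen_compl
    obtain ⟨G, hG, hGU, hGs⟩ := sTop_mem_basic hKco hUK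
    -- Ĝ is clopen
    set B : Set (Ultrafilter X) := {V : Ultrafilter X | G ∈ V} with hBdef
    have hBopen : IsOpen B := hbasic G hG
    have hBcompl : Bᶜ = {V : Ultrafilter X | Gᶜ ∈ V} := by
      ext V
      simp [hBdef, Ultrafilter.compl_mem_iff_notMem]
    have hBclosed : IsClosed B := by
      rw [← isOpen_compl_iff, hBcompl]
      exact hbasic Gᶜ (h G hG).isOpen_compl
    have hfront : frontier B = ∅ := by
      rw [frontier, hBclosed.closure_eq, hBopen.interior_eq, Set.diff_self]
    refine ⟨B.piecewise (fun _ => (0 : unitInterval)) (fun _ => 1), ?_, ?_, ?_⟩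
    · exact Continuous.piecewise (by simp [hfront]) continuous_const continuous_const
    · exact Set.piecewise_eq_of_mem _ _ _ hGU
    · intro V hV
      have : V ∉ B := fun hVB => hGs hVB hV
      exact Set.piecewise_eq_of_notMem _ _ _ this
end

section
/- Let X be a T0 topological space, let Y be a T0, locally compact, supercompact topological space, and let f : X → Y be continuous. Then there exists a continuous map F : W(X) → Y (with W(X) carrying the topology ^S T) such that F(pure x) = f(x) for all x ∈ X. (This is the weak-reflection content of Proposition 4.4 of the paper: the T0-reflection of (*X, ^S T) is the T0 locally compact supercompact compactification β₂X.) -/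
open Topology Filter


/-- weak-reflection content of Proposition 4.4: for `X` a T0 space,
`Y` a T0, locally compact, supercompact space, and `f : X → Y` continuous, there is a
continuous `F : W(X) → Y` with `F (pure x) = f x` for all `x`. -/
theorem stmt12 (X Y : Type*) [TopologicalSpace X] [T0Space X]
    [TopologicalSpace Y] [T0Space Y] [LocallyCompactSpace Y]
    (hsc : ∀ V : Ultrafilter Y, ∃ y : Y, {z : Y | ClusterPt z ↑V} = closure {y})
    (f : X → Y) (hf : Continuous f) :
    ∃ F : Ultrafilter X → Y,
      @Continuous (Ultrafilter X) Y (sTop X) _ F ∧ ∀ x : X, F (pure x) = f x := by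
  classical
  set g : Ultrafilter Y → Y := fun V => (hsc V).choose with hg
  have hgspec : ∀ V : Ultrafilter Y, {z : Y | ClusterPt z ↑V} = closure {g V} :=
    fun V => (hsc V).choose_spec
  -- g V is a limit point of V
  have hlim : ∀ V : Ultrafilter Y, ↑V ≤ 𝓝 (g V) := by
    intro V
    have : g V ∈ closure ({g V} : Set Y) := subset_closure rfl
    rw [← hgspec V] at this
    exact (Ultrafilter.clusterPt_iff (f := V)).mp this
  refine ⟨fun U => g (Ultrafilter.map f U), ?_, ?_⟩
  · letI : TopologicalSpace (Ultrafilter X) := sTop X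
    rw [continuous_def]
    intro O hO
    rw [isOpen_iff_forall_mem_open]
    intro U hU
    set V : Ultrafilter Y := Ultrafilter.map f U with hV
    have hgVO : g V ∈ O := hU
    obtain ⟨K, hKnhds, hKO, hKc⟩ := local_compact_nhds (hO.mem_nhds hgVO)
    refine ⟨{U' : Ultrafilter X | f ⁻¹' interior K ∈ U'}, ?_, ?_, ?_⟩
    · intro U' hU'
      have hKV' : K ∈ Ultrafilter.map f U' := by
        have : interior K ∈ Ultrafilter.map f U' := hU'
        exact Filter.mem_of_superset this interior_subset
      obtain ⟨z, hzK, hz⟩ := hKc.ultrafilter_le_nhds (Ultrafilter.map f U')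
        (Filter.le_principal_iff.mpr hKV')
      have hcl : ClusterPt z ↑(Ultrafilter.map f U') :=
        Ultrafilter.clusterPt_iff.mpr hz
      have : z ∈ closure ({g (Ultrafilter.map f U')} : Set Y) := by
        rw [← hgspec]; exact hcl
      have := mem_closure_iff.mp this O hO (hKO hzK)
      obtain ⟨w, hwO, hw⟩ := this
      simpa [Set.mem_singleton_iff.mp hw] using hwO
    · exact TopologicalSpace.GenerateOpen.basic _
        ⟨f ⁻¹' interior K, isOpen_interior.preimage hf, rfl⟩
    · show f ⁻¹' interior K ∈ U
      have : interior K ∈ V := hlim V (interior_mem_nhds.mpr hKnhds)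
      exact this
  · intro x
    have hmap : Ultrafilter.map f (pure x) = pure (f x) := Ultrafilter.map_pure f x
    show g (Ultrafilter.map f (pure x)) = f x
    rw [hmap]
    have h1 : {z : Y | ClusterPt z ↑(pure (f x) : Ultrafilter Y)} = closure {f x} := by
      ext z
      simp only [Set.mem_setOf_eq, Ultrafilter.coe_pure, ← Filter.principal_singleton,
        ← mem_closure_iff_clusterPt]
    have h2 : closure ({g (pure (f x))} : Set Y) = closure ({f x} : Set Y) := by
      rw [← hgspec, h1]
    exact ((inseparable_iff_closure_eq).mpr h2).eq
end

section
/- Let ℕ∞ = ℕ ∪ {∞} carry the topology u whose open sets are generated by the sets G_n = {m ∈ ℕ∞ | m ≤ n} for n ∈ ℕ (so the only u-neighbourhood of ∞ is ℕ∞ itself). Then (ℕ∞, u) is a T0, locally compact, supercompact space. (Example 2.6.3 of the paper.) -/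
/-- The topology of upper semicontinuity on `ℕ∞ = WithTop ℕ`, generated by the sets
`G_n = {m | m ≤ n}` for `n : ℕ` (so the only neighbourhood of `∞` is the whole space). -/
def uTop : TopologicalSpace (WithTop ℕ) :=
  TopologicalSpace.generateFrom
    {s : Set (WithTop ℕ) | ∃ n : ℕ, s = {m : WithTop ℕ | m ≤ (n : WithTop ℕ)}}

section Stmt15Aux

open Set Filter Topology

attribute [local instance] uTop

lemma uTop_cases (z : WithTop ℕ) : z = ⊤ ∨ ∃ n : ℕ, z = (n : WithTop ℕ) := by
  cases z using WithTop.recTopCoe with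
  | top => exact Or.inl rfl
  | coe n => exact Or.inr ⟨n, by norm_cast⟩

lemma uTop_isOpen_G (n : ℕ) : IsOpen {m : WithTop ℕ | m ≤ (n : WithTop ℕ)} :=
  TopologicalSpace.GenerateOpen.basic _ ⟨n, rfl⟩

lemma uTop_down_closed {U : Set (WithTop ℕ)} (hU : IsOpen U) :
    ∀ z ∈ U, ∀ w, w ≤ z → w ∈ U := by
  have hU' : TopologicalSpace.GenerateOpen
      {s : Set (WithTop ℕ) | ∃ n : ℕ, s = {m : WithTop ℕ | m ≤ (n : WithTop ℕ)}} U := hU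
  clear hU
  induction hU' with
  | basic s hs => obtain ⟨n, rfl⟩ := hs; exact fun z hz w hw => le_trans hw hz
  | univ => intros; trivial
  | inter s t _ _ ihs iht => exact fun z hz w hw => ⟨ihs z hz.1 w hw, iht z hz.2 w hw⟩
  | sUnion S _ ih =>
      rintro z ⟨s, hs, hzs⟩ w hw; exact ⟨s, hs, ih s hs z hzs w hw⟩

lemma uTop_eq_univ_of_top_mem {U : Set (WithTop ℕ)} (hU : IsOpen U) (hT : ⊤ ∈ U) :
    U = univ := by
  have hU' : TopologicalSpace.GenerateOpen
      {s : Set (WithTop ℕ) | ∃ n : ℕ, s = {m : WithTop ℕ | m ≤ (n : WithTop ℕ)}} U := hU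
  clear hU
  induction hU' with
  | basic s hs =>
      obtain ⟨n, rfl⟩ := hs
      exact absurd hT (by simp)
  | univ => rfl
  | inter s t _ _ ihs iht => rw [ihs hT.1, iht hT.2]; simp
  | sUnion S _ ih =>
      obtain ⟨t, htS, htv⟩ := hT
      apply eq_univ_of_univ_subset
      rw [← ih t htS htv]
      exact subset_sUnion_of_mem htS

lemma uTop_nhds_top : 𝓝 (⊤ : WithTop ℕ) = ⊤ := by
  apply top_unique
  intro s hs
  rcases mem_nhds_iff.1 hs with ⟨V, hVs, hVopen, hV⟩
  have hVuniv := uTop_eq_univ_of_top_mem hVopen hV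
  have : s = univ := eq_univ_of_univ_subset (hVuniv ▸ hVs)
  simp [this]

lemma uTop_nhds_coe (n : ℕ) :
    𝓝 ((n : WithTop ℕ)) = 𝓟 {m : WithTop ℕ | m ≤ (n : WithTop ℕ)} := by
  refine le_antisymm (le_principal_iff.2 ((uTop_isOpen_G n).mem_nhds (show (n:WithTop ℕ) ≤ (n:WithTop ℕ) from le_rfl))) ?_
  intro s hs
  rcases mem_nhds_iff.1 hs with ⟨V, hVs, hVopen, hV⟩
  exact mem_principal.2 fun w hw => hVs (uTop_down_closed hVopen _ hV w hw)

lemma uTop_closure_singleton (y : WithTop ℕ) : closure {y} = Ici y := by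
  ext z
  rw [mem_Ici, mem_closure_iff]
  constructor
  · intro h
    by_contra hzy
    rcases uTop_cases z with rfl | ⟨m, rfl⟩
    · exact hzy le_top
    · obtain ⟨w, hw, hwy⟩ := h _ (uTop_isOpen_G m) (show (m:WithTop ℕ) ≤ (m:WithTop ℕ) from le_rfl)
      rw [mem_singleton_iff] at hwy
      exact hzy (hwy ▸ hw)
  · intro h o ho hz
    exact ⟨y, uTop_down_closed ho z hz y h, rfl⟩

lemma uTop_compact_G (n : ℕ) : IsCompact {m : WithTop ℕ | m ≤ (n : WithTop ℕ)} := by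
  have hsub : {m : WithTop ℕ | m ≤ (n : WithTop ℕ)} ⊆
      (fun k : ℕ => (k : WithTop ℕ)) '' Set.Iic n := by
    intro m hm
    rcases uTop_cases m with rfl | ⟨k, rfl⟩
    · exact absurd hm (by simp)
    · exact ⟨k, Set.mem_Iic.2 (by exact_mod_cast (show (k:WithTop ℕ) ≤ (n:WithTop ℕ) from hm)), rfl⟩
  exact (((Set.finite_Iic n).image _).subset hsub).isCompact

lemma uTop_compact_univ : IsCompact (Set.univ : Set (WithTop ℕ)) := by
  rw [isCompact_iff_ultrafilter_le_nhds]
  intro f _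
  exact ⟨⊤, mem_univ _, by rw [uTop_nhds_top]; exact le_top⟩

lemma uTop_t0 : T0Space (WithTop ℕ) := by
  constructor
  intro x y h
  have h1 : y ∈ closure {x} := h.specializes.mem_closure
  have h2 : x ∈ closure {y} := h.symm.specializes.mem_closure
  rw [uTop_closure_singleton, mem_Ici] at h1 h2
  exact le_antisymm h1 h2

lemma uTop_locallyCompact : LocallyCompactSpace (WithTop ℕ) := by
  constructor
  intro x U hU
  rcases uTop_cases x with rfl | ⟨n, rfl⟩
  · rw [uTop_nhds_top, mem_top] at hU
    subst hU
    exact ⟨univ, by rw [uTop_nhds_top]; exact mem_top.2 rfl, subset_rfl, uTop_compact_univ⟩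
  · rw [uTop_nhds_coe, mem_principal] at hU
    exact ⟨{m : WithTop ℕ | m ≤ (n : WithTop ℕ)},
      by rw [uTop_nhds_coe]; exact mem_principal_self _, hU, uTop_compact_G n⟩

lemma uTop_supercompact (V : Ultrafilter (WithTop ℕ)) :
    ∃ y : WithTop ℕ, {z : WithTop ℕ | ClusterPt z ↑V} = closure {y} := by
  classical
  by_cases h : ∃ n : ℕ, {m : WithTop ℕ | m ≤ (n : WithTop ℕ)} ∈ V
  · refine ⟨((Nat.find h : ℕ) : WithTop ℕ), ?_⟩
    rw [uTop_closure_singleton]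
    ext z
    simp only [mem_setOf_eq, mem_Ici, Ultrafilter.clusterPt_iff]
    rcases uTop_cases z with rfl | ⟨m, rfl⟩
    · simp [uTop_nhds_top]
    · rw [uTop_nhds_coe, le_principal_iff, Nat.cast_le]
      constructor
      · intro hm
        by_contra hlt
        exact Nat.find_min h (lt_of_not_ge hlt) hm
      · intro hm
        exact V.toFilter.mem_of_superset (Nat.find_spec h)
          (fun w hw => show w ≤ (m : WithTop ℕ) from le_trans (show w ≤ ((Nat.find h : ℕ) : WithTop ℕ) from hw) (by exact_mod_cast hm))
  · refine ⟨⊤, ?_⟩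
    rw [uTop_closure_singleton]
    ext z
    simp only [mem_setOf_eq, mem_Ici, top_le_iff, Ultrafilter.clusterPt_iff]
    rcases uTop_cases z with rfl | ⟨m, rfl⟩
    · simp [uTop_nhds_top]
    · rw [uTop_nhds_coe, le_principal_iff]
      constructor
      · intro hm
        exact absurd ⟨m, hm⟩ h
      · intro hm
        exact absurd hm (by simp)

end Stmt15Aux

/-- Example 2.6.3: `(ℕ∞, u)` is a T0, locally compact, supercompact
space. -/
theorem stmt15 :
    @T0Space (WithTop ℕ) uTop ∧
    @LocallyCompactSpace (WithTop ℕ) uTop ∧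
    (∀ V : Ultrafilter (WithTop ℕ), ∃ y : WithTop ℕ,
      {z : WithTop ℕ | @ClusterPt (WithTop ℕ) uTop z ↑V}
        = @closure (WithTop ℕ) uTop {y}) := by
  exact ⟨uTop_t0, uTop_locallyCompact, uTop_supercompact⟩
end

section
/- Let T be the topology on ℕ generated by the sets G_n = {m ∈ ℕ | m ≤ n} for n ∈ ℕ (the topology of upper semicontinuity). If U is a free (non-principal) ultrafilter on ℕ, then the only ^S T-open subset of W(ℕ) = (Ultrafilter ℕ, ^S T) containing U is all of W(ℕ). (Example 2.1 of the paper.) -/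
/-- The topology of upper semicontinuity on `ℕ`, generated by the sets
`G_n = {m | m ≤ n}` for `n : ℕ`. -/
def uscTop : TopologicalSpace ℕ :=
  TopologicalSpace.generateFrom {s : Set ℕ | ∃ n : ℕ, s = {m : ℕ | m ≤ n}}

/-- The "standard" topology `^S T` on `Ultrafilter X` generated by the sets
`Ĝ = {U | G ∈ U}` for `G` open in the topology `T` on `X`. -/
def sTop' {X : Type*} (T : TopologicalSpace X) : TopologicalSpace (Ultrafilter X) :=
  TopologicalSpace.generateFrom
    {s : Set (Ultrafilter X) | ∃ G : Set X, T.IsOpen G ∧ s = {U : Ultrafilter X | G ∈ U}}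

/-- Every `uscTop`-open set is downward closed. -/
lemma usc_down {G : Set ℕ} (h : uscTop.IsOpen G) : ∀ a b : ℕ, a ≤ b → b ∈ G → a ∈ G := by
  change TopologicalSpace.GenerateOpen _ G at h
  induction h with
  | basic s hs =>
      obtain ⟨n, rfl⟩ := hs
      intro a b hab hb
      exact le_trans hab hb
  | univ => intro a b _ _; trivial
  | inter s t _ _ ihs iht =>
      intro a b hab hb
      exact ⟨ihs a b hab hb.1, iht a b hab hb.2⟩
  | sUnion S _ ih =>
      intro a b hab hb
      obtain ⟨t, ht, hbt⟩ := hb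
      exact ⟨t, ht, ih t ht a b hab hbt⟩

lemma usc_mem_univ (U : Ultrafilter ℕ) (hU : ∀ A : Set ℕ, A.Finite → A ∉ U)
    {G : Set ℕ} (h : uscTop.IsOpen G) (hG : G ∈ U) : G = Set.univ := by
  have hinf : G.Infinite := by
    by_contra hfin
    exact hU G (Set.not_infinite.mp hfin) hG
  ext b
  simp only [Set.mem_univ, iff_true]
  obtain ⟨c, hc, hbc⟩ := hinf.exists_gt b
  exact usc_down h b c hbc.le hc

/-- Example 2.1: if `U` is a free ultrafilter on `ℕ` (it contains no
finite set), then the only `^S T`-open subset of `W(ℕ)` containing `U` is all of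
`W(ℕ)`, where `T` is the topology of upper semicontinuity. -/
theorem stmt16 (U : Ultrafilter ℕ) (hU : ∀ A : Set ℕ, A.Finite → A ∉ U) :
    ∀ s : Set (Ultrafilter ℕ), (sTop' uscTop).IsOpen s → U ∈ s → s = Set.univ := by
  intro s hs
  change TopologicalSpace.GenerateOpen _ s at hs
  induction hs with
  | basic t ht =>
      intro hUt
      obtain ⟨G, hGopen, rfl⟩ := ht
      have : G = Set.univ := usc_mem_univ U hU hGopen hUt
      subst this
      ext V
      simp only [Set.mem_univ, iff_true, Set.mem_setOf_eq]; exact Filter.univ_mem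
  | univ => intro _; rfl
  | inter s t _ _ ihs iht =>
      intro h
      rw [ihs h.1, iht h.2, Set.univ_inter]
  | sUnion S _ ih =>
      intro h
      obtain ⟨t, ht, hUt⟩ := h
      exact Set.eq_univ_of_univ_subset ((ih t ht hUt).symm.le.trans (Set.subset_sUnion_of_mem ht))
end
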